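/- Let α ∈ (0, 1/2), and suppose a sequence of estimators f̂_t satisfies |f̂_t − f*| ≤ (2/C)·sup_ℓ |ϑ̂_t(ℓ) − ϑ(ℓ)| for a constant C > 0, where for each ε > 0, P(sup_ℓ |ϑ̂_t(ℓ) − ϑ(ℓ)| ≥ ε) ≤ 2M·exp(−2 N_t ε²/(4(Q_u − Q_l)²)) with N_t ≥ τ^t N_0 for τ > 1. Then N_t^α · (f̂_t − f*) → 0 almost surely as t → ∞. -/
import Mathlib


open MeasureTheory Filter

set_option maxHeartbeats 1000000 in
/-- If the estimator error is controlled by the sup-deviation of the empirical objective,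
whose tail obeys a Hoeffding-type bound with geometrically growing sample sizes
N_t ≥ τ^t·N_0, then N_t^α·(f̂_t − f*) → 0 almost surely for α ∈ (0, 1/2). -/
theorem stmt15 {Ω : Type*} [MeasurableSpace Ω] (μ : Measure Ω) [IsProbabilityMeasure μ]
    (α : ℝ) (hα : α ∈ Set.Ioo (0 : ℝ) (1 / 2))
    (C : ℝ) (hC : 0 < C) (M : ℕ) (Ql Qu : ℝ) (hQ : Ql < Qu)
    (τ : ℝ) (hτ : 1 < τ) (N0 : ℝ) (hN0 : 0 < N0)
    (N : ℕ → ℝ) (hN : ∀ t, τ ^ t * N0 ≤ N t)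
    (fhat : ℕ → Ω → ℝ) (fstar : ℝ) (S : ℕ → Ω → ℝ)
    (hSmeas : ∀ t, Measurable (S t))
    (hctrl : ∀ t ω, |fhat t ω - fstar| ≤ (2 / C) * S t ω)
    (htail : ∀ t, ∀ ε > (0 : ℝ), μ {ω | ε ≤ S t ω} ≤
        ENNReal.ofReal (2 * (M : ℝ) * Real.exp (-2 * N t * ε ^ 2 / (4 * (Qu - Ql) ^ 2)))) :
    ∀ᵐ ω ∂μ, Tendsto (fun t => N t ^ α * (fhat t ω - fstar)) atTop (nhds 0) := by
  obtain ⟨hα0, hα2⟩ := hα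
  have hτ0 : (0:ℝ) < τ := lt_trans one_pos hτ
  have hNpos : ∀ t, 0 < N t := fun t => lt_of_lt_of_le (mul_pos (pow_pos hτ0 t) hN0) (hN t)
  have hNapos : ∀ t, (0:ℝ) < N t ^ α := fun t => Real.rpow_pos_of_pos (hNpos t) α
  have hβ : (0:ℝ) < 1 - 2*α := by linarith
  have hDpos : (0:ℝ) < 4 * (Qu - Ql)^2 := by
    have := sub_pos.2 hQ; positivity
  set D := 4 * (Qu - Ql)^2 with hD
  set r := τ ^ (1 - 2*α) with hr
  have hr1 : 1 < r := by
    rw [hr]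
    exact Real.one_lt_rpow_iff_of_pos hτ0 |>.2 (Or.inl ⟨hτ, hβ⟩)
  have hmain : ∀ t, N0 ^ (1 - 2*α) * r ^ t ≤ N t ^ (1 - 2*α) := by
    intro t
    have h1 : N0 ^ (1 - 2*α) * r ^ t = (τ ^ t * N0) ^ (1 - 2*α) := by
      rw [hr, ← Real.rpow_natCast (τ ^ (1 - 2*α)) t, ← Real.rpow_mul hτ0.le,
        mul_comm (1 - 2*α), Real.rpow_mul hτ0.le, Real.rpow_natCast,
        Real.mul_rpow (pow_nonneg hτ0.le t) hN0.le, mul_comm]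
    rw [h1]
    exact Real.rpow_le_rpow (by positivity) (hN t) hβ.le
  have key : ∀ δ : ℝ, 0 < δ → ∀ᵐ ω ∂μ, ∀ᶠ t in atTop,
      N t ^ α * |fhat t ω - fstar| < δ := by
    intro δ hδ
    have hN0β : (0:ℝ) < N0 ^ (1 - 2*α) := Real.rpow_pos_of_pos hN0 _
    set c := 2 * (C*δ/2)^2 / D * N0 ^ (1 - 2*α) with hc
    have hcpos : 0 < c := by positivity
    set q := Real.exp (-(c*(r-1))) with hq
    have hq0 : (0:ℝ) ≤ q := (Real.exp_pos _).le
    have hq1 : q < 1 := by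
      rw [hq]
      exact Real.exp_lt_one_iff.2 (by nlinarith)
    set ε : ℕ → ℝ := fun t => (C*δ/2) / N t ^ α with hε
    have hεpos : ∀ t, 0 < ε t := fun t => div_pos (by positivity) (hNapos t)
    set s : ℕ → Set Ω := fun t => {ω | ε t ≤ S t ω} with hs
    set g : ℕ → ℝ := fun t => (2*(M:ℝ)*Real.exp (-c)) * q ^ t with hg
    have hNt : ∀ t, N t * ε t ^ 2 = (C*δ/2)^2 * N t ^ (1 - 2*α) := by
      intro t
      have h1 : (N t ^ α) ^ 2 = N t ^ (2*α) := by
        rw [← Real.rpow_natCast (N t ^ α) 2, ← Real.rpow_mul (hNpos t).le]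
        norm_num [mul_comm]
      have h2 : N t ^ (1 - 2*α) = N t / N t ^ (2*α) := by
        rw [Real.rpow_sub (hNpos t), Real.rpow_one]
      simp only [hε, div_pow, h1]
      rw [h2]
      field_simp
    have hexp : ∀ t, Real.exp (-2 * N t * ε t ^ 2 / D) ≤ Real.exp (-c) * q ^ t := by
      intro t
      have hA : -2 * N t * ε t ^ 2 / D ≤ -(c * r ^ t) := by
        have e1 : -2 * N t * ε t ^ 2 / D = -(2 * (C*δ/2)^2 / D * N t ^ (1 - 2*α)) := by
          rw [mul_assoc, hNt t]; ring
        have e2 : c * r ^ t = 2 * (C*δ/2)^2 / D * (N0 ^ (1 - 2*α) * r ^ t) := by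
          rw [hc]; ring
        rw [e1, e2, neg_le_neg_iff]
        exact mul_le_mul_of_nonneg_left (hmain t) (by positivity)
      have hB : -(c * r ^ t) ≤ -c + (t:ℝ) * (-(c*(r-1))) := by
        have hbern : 1 + (t:ℝ) * (r - 1) ≤ r ^ t := by
          have := one_add_mul_le_pow (by linarith : (-2:ℝ) ≤ r - 1) t
          simpa using this
        nlinarith [hcpos]
      calc Real.exp (-2 * N t * ε t ^ 2 / D) ≤ Real.exp (-(c * r ^ t)) :=
            Real.exp_le_exp.2 hA
        _ ≤ Real.exp (-c + (t:ℝ) * (-(c*(r-1)))) := Real.exp_le_exp.2 hB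
        _ = Real.exp (-c) * q ^ t := by
            rw [Real.exp_add, Real.exp_nat_mul]
    have hgsum : Summable g :=
      (summable_geometric_of_lt_one hq0 hq1).mul_left _
    have hsum : (∑' t, μ (s t)) ≠ ⊤ := by
      have h1 : ∀ t, μ (s t) ≤ ENNReal.ofReal (g t) := by
        intro t
        refine (htail t (ε t) (hεpos t)).trans (ENNReal.ofReal_le_ofReal ?_)
        have := hexp t
        calc 2 * (M:ℝ) * Real.exp (-2 * N t * ε t ^ 2 / D)
            ≤ 2 * (M:ℝ) * (Real.exp (-c) * q ^ t) :=
              mul_le_mul_of_nonneg_left (hexp t) (by positivity)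
          _ = g t := by rw [hg]; ring
      have h2 : (∑' t, μ (s t)) ≤ ∑' t, ENNReal.ofReal (g t) := ENNReal.tsum_le_tsum h1
      have h3 : (∑' t, ENNReal.ofReal (g t)) = ENNReal.ofReal (∑' t, g t) :=
        (ENNReal.ofReal_tsum_of_nonneg (fun t => by positivity) hgsum).symm
      exact ne_top_of_le_ne_top (by rw [h3]; exact ENNReal.ofReal_ne_top) h2
    filter_upwards [MeasureTheory.ae_eventually_notMem hsum] with ω hω
    filter_upwards [hω] with t ht
    have hlt : S t ω < ε t := lt_of_not_ge ht
    have h1 : |fhat t ω - fstar| < δ / N t ^ α := by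
      have h2 : (2 / C) * ε t = δ / N t ^ α := by
        rw [hε]
        show (2 / C) * ((C*δ/2) / N t ^ α) = δ / N t ^ α
        rw [div_mul_div_comm, show 2 * (C*δ/2) = C * δ by ring,
          mul_div_mul_left _ _ hC.ne']
      calc |fhat t ω - fstar| ≤ (2 / C) * S t ω := hctrl t ω
        _ < (2 / C) * ε t := by
            exact mul_lt_mul_of_pos_left hlt (by positivity)
        _ = δ / N t ^ α := h2
    have h3 := mul_lt_mul_of_pos_left h1 (hNapos t)
    rwa [mul_comm (N t ^ α) (δ / N t ^ α), div_mul_cancel₀ δ (hNapos t).ne'] at h3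
  have hall : ∀ᵐ ω ∂μ, ∀ k : ℕ, ∀ᶠ t in atTop,
      N t ^ α * |fhat t ω - fstar| < 1 / ((k:ℝ) + 1) :=
    ae_all_iff.2 fun k => key _ (by positivity)
  filter_upwards [hall] with ω hω
  rw [NormedAddCommGroup.tendsto_nhds_zero]
  intro e he
  obtain ⟨k, hk⟩ := exists_nat_one_div_lt he
  filter_upwards [hω k] with t ht
  rw [Real.norm_eq_abs, abs_mul, abs_of_pos (hNapos t)]
  exact ht.trans hk
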